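/- Let q > 1 be real, y be real, m ≥ 2 an integer, and set ρ = q^{-(m-1)/2}. Let x_1, …, x_m be real numbers and λ : {1,…,m} → ℝ with ∑_{j=1}^{m} λ_j = 1. Then the following two conditions are equivalent: (a) ∑_{j=1}^{m} λ_j · p_k(x_j | y, ρ, q) = 0 for all k = 1, …, m-1; (b) ∑_{j=1}^{m} λ_j · H_k(x_j|q) = ρ^k · H_k(y|q) for all k = 1, …, m-1. -/
import Mathlib


/-- `[n]_q = 1 + q + ⋯ + q^{n-1}`. -/
def qInt (q : ℝ) (n : ℕ) : ℝ := ∑ i ∈ Finset.range n, q ^ i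

/-- The `q`-Hermite polynomials `H_n(x|q)`:
`H_0 = 1`, `H_1 = x`, `H_{n+2} = x·H_{n+1} - [n+1]_q·H_n`. -/
noncomputable def Hq (q x : ℝ) : ℕ → ℝ
  | 0 => 1
  | 1 => x
  | n + 2 => x * Hq q x (n + 1) - qInt q (n + 1) * Hq q x n

/-- The Al-Salam-Chihara polynomials `p_n(x|y,ρ,q)`:
`p_0 = 1`, `p_1 = x - ρy`, and
`p_{n+2} = (x - ρyq^{n+1})·p_{n+1} - (1 - ρ²q^n)·[n+1]_q·p_n`. -/
noncomputable def ascP (q ρ y x : ℝ) : ℕ → ℝ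
  | 0 => 1
  | 1 => x - ρ * y
  | n + 2 => (x - ρ * y * q ^ (n + 1)) * ascP q ρ y x (n + 1)
      - (1 - ρ ^ 2 * q ^ n) * qInt q (n + 1) * ascP q ρ y x n

/-- Gaussian (q-)binomial coefficients. -/
noncomputable def qbin (q : ℝ) : ℕ → ℕ → ℝ
  | 0, 0 => 1
  | 0, _ + 1 => 0
  | _ + 1, 0 => 1
  | n + 1, k + 1 => qbin q n (k + 1) + q ^ (n - k) * qbin q n k

lemma qInt_zero (q : ℝ) : qInt q 0 = 0 := by simp [qInt]

lemma qInt_one (q : ℝ) : qInt q 1 = 1 := by simp [qInt]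

lemma qInt_add (q : ℝ) (a b : ℕ) : qInt q (a + b) = qInt q a + q ^ a * qInt q b := by
  unfold qInt
  rw [Finset.sum_range_add, Finset.mul_sum]
  congr 1
  exact Finset.sum_congr rfl fun i _ => by rw [pow_add]

lemma qbin_zero_right (q : ℝ) (n : ℕ) : qbin q n 0 = 1 := by
  cases n <;> simp [qbin]

lemma qbin_eq_zero (q : ℝ) : ∀ n k, n < k → qbin q n k = 0 := by
  intro n
  induction n with
  | zero => intro k hk; match k, hk with | k + 1, _ => simp [qbin]
  | succ n ih =>
    intro k hk
    match k, hk with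
    | k + 1, hk =>
      have h1 : n < k + 1 := by omega
      have h2 : n < k := by omega
      simp [qbin, ih _ h1, ih _ h2]

lemma qbin_self (q : ℝ) (n : ℕ) : qbin q n n = 1 := by
  induction n with
  | zero => simp [qbin]
  | succ n ih => simp [qbin, ih, qbin_eq_zero q n (n + 1) (by omega)]

/-- absorption identities for q-binomials. -/
lemma qbin_absorb (q : ℝ) : ∀ n j,
    qInt q (j + 1) * qbin q (n + 1) (j + 1) = qInt q (n + 1) * qbin q n j ∧
    qInt q (n + 1 - j) * qbin q (n + 1) j = qInt q (n + 1) * qbin q n j := by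
  intro n
  induction n with
  | zero =>
    intro j
    match j with
    | 0 => norm_num [qbin, qInt_one]
    | j + 1 =>
      constructor
      · rw [qbin_eq_zero q 1 (j + 2) (by omega), qbin_eq_zero q 0 (j + 1) (by omega)]
        ring
      · have hz : 0 + 1 - (j + 1) = 0 := by omega
        rw [hz, qInt_zero, qbin_eq_zero q 0 (j + 1) (by omega)]
        ring
  | succ n ih =>
    intro j
    rcases le_or_gt j (n + 1) with hj | hj
    · have hA1 := (ih j).1
      have hA2 := (ih j).2
      have hsplit : qInt q (n + 2) = qInt q (n + 1 - j) + q ^ (n + 1 - j) * qInt q (j + 1) := by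
        have h : n + 1 - j + (j + 1) = n + 2 := by omega
        rw [← h, qInt_add]
      constructor
      · -- [j+1] * qbin (n+2) (j+1) = [n+2] * qbin (n+1) j
        have hP : qbin q (n + 1 + 1) (j + 1) =
            qbin q (n + 1) (j + 1) + q ^ (n + 1 - j) * qbin q (n + 1) j := by
          rw [qbin]
        rw [hP, show n + 1 + 1 = n + 2 from rfl, hsplit]
        linear_combination hA1 - hA2
      · -- [n+2-j] * qbin (n+2) j = [n+2] * qbin (n+1) j
        match j, hj with
        | 0, _ => simp [qbin_zero_right]
        | k + 1, hj =>
          have hA1k := (ih k).1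
          have hA2k := (ih k).2
          have e1 : n + 1 + 1 - (k + 1) = n + 1 - k := by omega
          have hsplit3 : qInt q (n + 2) = qInt q (n + 1 - k) + q ^ (n + 1 - k) * qInt q (k + 1) := by
            have h : (n + 1 - k) + (k + 1) = n + 2 := by omega
            rw [← h, qInt_add]
          have hP : qbin q (n + 1 + 1) (k + 1) =
              qbin q (n + 1) (k + 1) + q ^ (n + 1 - k) * qbin q (n + 1) k := by
            rw [qbin]
          rw [e1, hP, show n + 1 + 1 = n + 2 from rfl, hsplit3]
          linear_combination (q ^ (n + 1 - k)) * hA2k - (q ^ (n + 1 - k)) * hA1k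
    · -- j > n + 1 : all terms vanish
      constructor
      · rw [qbin_eq_zero q (n + 2) (j + 1) (by omega), qbin_eq_zero q (n + 1) j (by omega)]
        ring
      · have hz : n + 1 + 1 - j = 0 := by omega
        rw [qbin_eq_zero q (n + 1) j (by omega), hz, qInt_zero]
        ring

/-- Connection coefficients: `Hq n = ∑_j E n j · ascP j`. -/
noncomputable def Econ (q ρ y : ℝ) : ℕ → ℕ → ℝ
  | 0, j => if j = 0 then 1 else 0
  | 1, j => if j = 0 then ρ * y else if j = 1 then 1 else 0
  | n + 2, j =>
      (if j = 0 then 0 else Econ q ρ y (n + 1) (j - 1)) + ρ * y * q ^ j * Econ q ρ y (n + 1) j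
      + (1 - ρ ^ 2 * q ^ j) * qInt q (j + 1) * Econ q ρ y (n + 1) (j + 1)
      - qInt q (n + 1) * Econ q ρ y n j

lemma Econ_eq_zero (q ρ y : ℝ) : ∀ n j, n < j → Econ q ρ y n j = 0 := by
  have key : ∀ n, (∀ j, n < j → Econ q ρ y n j = 0) ∧ (∀ j, n + 1 < j → Econ q ρ y (n + 1) j = 0) := by
    intro n
    induction n with
    | zero =>
      constructor
      · intro j hj
        have h0 : j ≠ 0 := by omega
        simp [Econ, h0]
      · intro j hj
        have h0 : j ≠ 0 := by omega
        have h1 : j ≠ 1 := by omega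
        simp [Econ, h0, h1]
    | succ n ih =>
      refine ⟨ih.2, fun j hj => ?_⟩
      have h0 : j ≠ 0 := by omega
      show Econ q ρ y (n + 2) j = 0
      rw [Econ]
      rw [if_neg h0, ih.2 (j - 1) (by omega), ih.2 j (by omega), ih.2 (j + 1) (by omega),
        ih.1 j (by omega)]
      ring
  exact fun n => (key n).1

lemma Hq_one (q y : ℝ) : Hq q y 1 = y := rfl

/-- The closed form of the connection coefficients. -/
lemma Econ_eq (q ρ y : ℝ) : ∀ n i, i ≤ n →
    Econ q ρ y n (n - i) = qbin q n i * ρ ^ i * Hq q y i := by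
  have key : ∀ n, (∀ i, i ≤ n → Econ q ρ y n (n - i) = qbin q n i * ρ ^ i * Hq q y i) ∧
      (∀ i, i ≤ n + 1 → Econ q ρ y (n + 1) (n + 1 - i) = qbin q (n + 1) i * ρ ^ i * Hq q y i) := by
    intro n
    induction n with
    | zero =>
      constructor
      · intro i hi
        interval_cases i
        simp [Econ, qbin, Hq]
      · intro i hi
        interval_cases i
        · simp [Econ, qbin, Hq]
        · simp [Econ, qbin, Hq]
    | succ n ih =>
      refine ⟨ih.2, fun i hi => ?_⟩
      have hE1top : Econ q ρ y (n + 1) (n + 1) = 1 := by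
        have := ih.2 0 (by omega)
        simpa [qbin_zero_right, Hq] using this
      match i with
      | 0 =>
        show Econ q ρ y (n + 2) (n + 2) = qbin q (n + 2) 0 * ρ ^ 0 * Hq q y 0
        rw [Econ]
        rw [if_neg (by omega), Econ_eq_zero q ρ y (n + 1) (n + 2) (by omega),
          Econ_eq_zero q ρ y (n + 1) (n + 3) (by omega),
          Econ_eq_zero q ρ y n (n + 2) (by omega),
          show n + 2 - 1 = n + 1 from rfl, hE1top]
        simp [qbin_zero_right, Hq]
      | 1 =>
        show Econ q ρ y (n + 2) (n + 2 - 1) = qbin q (n + 2) 1 * ρ ^ 1 * Hq q y 1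
        have hE1n : Econ q ρ y (n + 1) n = qbin q (n + 1) 1 * ρ ^ 1 * Hq q y 1 := by
          have := ih.2 1 (by omega)
          rwa [show n + 1 - 1 = n from rfl] at this
        rw [show n + 2 - 1 = n + 1 from rfl, Econ]
        rw [if_neg (by omega), Econ_eq_zero q ρ y (n + 1) (n + 2) (by omega),
          Econ_eq_zero q ρ y n (n + 1) (by omega),
          show n + 1 - 1 = n from rfl, hE1n, hE1top]
        have hP : qbin q (n + 2) 1 = qbin q (n + 1) 1 + q ^ (n + 1 - 0) * qbin q (n + 1) 0 := by
          conv_lhs => rw [qbin]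
        rw [hP, qbin_zero_right]
        simp only [Hq, pow_one, Nat.sub_zero]
        ring
      | i + 2 =>
        have hi' : i ≤ n := by omega
        rw [show n + 2 - (i + 2) = n - i from by omega, Econ]
        have hif : (if n - i = 0 then (0:ℝ) else Econ q ρ y (n + 1) (n - i - 1)) =
            qbin q (n + 1) (i + 2) * ρ ^ (i + 2) * Hq q y (i + 2) := by
          rcases Nat.lt_or_ge i n with h | h
          · rw [if_neg (by omega), show n - i - 1 = n + 1 - (i + 2) from by omega,
              ih.2 (i + 2) (by omega)]
          · rw [if_pos (by omega), qbin_eq_zero q (n + 1) (i + 2) (by omega)]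
            ring
        have ea : n - i = n + 1 - (i + 1) := by omega
        have eb : n + 1 - (i + 1) + 1 = n + 1 - i := by omega
        have ec : n + 1 - (i + 1) = n - i := by omega
        have ed : n + 1 - (i + 1) = n - i := by omega
        rw [hif, ea, ih.2 (i + 1) (by omega), eb, ih.2 i (by omega), ec]
        have hA1 := (qbin_absorb q n i).1
        have hA2 := (qbin_absorb q n i).2
        have hgoalqbin : qbin q (n + 2) (i + 2) =
            qbin q (n + 1) (i + 2) + q ^ (n - i) * qbin q (n + 1) (i + 1) := by
          conv_lhs => rw [qbin]
          rw [ed]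
        have hHy : Hq q y (i + 2) = y * Hq q y (i + 1) - qInt q (i + 1) * Hq q y i := rfl
        have hEcur : Econ q ρ y n (n - i) = qbin q n i * ρ ^ i * Hq q y i :=
          ih.1 i hi'
        rw [hEcur, hgoalqbin, hHy]
        linear_combination (ρ ^ i * Hq q y i * (1 - ρ ^ 2 * q ^ (n - i))) * hA2
          + (ρ ^ i * Hq q y i * ρ ^ 2 * q ^ (n - i)) * hA1
  exact fun n => (key n).1

lemma Econ_diag (q ρ y : ℝ) (n : ℕ) : Econ q ρ y n n = 1 := by
  have := Econ_eq q ρ y n 0 (by omega)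
  simpa [qbin_zero_right, Hq] using this

lemma Econ_left (q ρ y : ℝ) (n : ℕ) : Econ q ρ y n 0 = ρ ^ n * Hq q y n := by
  have := Econ_eq q ρ y n n le_rfl
  simpa [qbin_self] using this

lemma ascP_mul (q ρ y x : ℝ) (j : ℕ) : x * ascP q ρ y x j =
    ascP q ρ y x (j + 1) + ρ * y * q ^ j * ascP q ρ y x j
      + (1 - ρ ^ 2 * q ^ (j - 1)) * qInt q j * ascP q ρ y x (j - 1) := by
  match j with
  | 0 => simp [ascP, qInt_zero]
  | j + 1 =>
    rw [show ascP q ρ y x (j + 1 + 1) = (x - ρ * y * q ^ (j + 1)) * ascP q ρ y x (j + 1)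
      - (1 - ρ ^ 2 * q ^ j) * qInt q (j + 1) * ascP q ρ y x j from rfl]
    simp only [Nat.add_sub_cancel]
    ring

/-- The connection identity. -/
lemma Hq_eq_sum (q ρ y x : ℝ) : ∀ n,
    Hq q x n = ∑ j ∈ Finset.range (n + 1), Econ q ρ y n j * ascP q ρ y x j := by
  have key : ∀ n,
      (Hq q x n = ∑ j ∈ Finset.range (n + 1), Econ q ρ y n j * ascP q ρ y x j) ∧
      (Hq q x (n + 1) = ∑ j ∈ Finset.range (n + 2), Econ q ρ y (n + 1) j * ascP q ρ y x j) := by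
    intro n
    induction n with
    | zero =>
      constructor
      · simp [Hq, Econ, ascP]
      · rw [show Hq q x 1 = x from rfl]
        rw [Finset.sum_range_succ, Finset.sum_range_one]
        simp [Econ, ascP]
    | succ n ih =>
      refine ⟨ih.2, ?_⟩
      have h1 := ih.2
      have h0 := ih.1
      show Hq q x (n + 2) = ∑ j ∈ Finset.range (n + 3), Econ q ρ y (n + 2) j * ascP q ρ y x j
      have hrec : Hq q x (n + 2) = x * Hq q x (n + 1) - qInt q (n + 1) * Hq q x n := rfl
      rw [hrec, h1, h0]
      have hR : ∑ j ∈ Finset.range (n + 3), Econ q ρ y (n + 2) j * ascP q ρ y x j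
          = (∑ j ∈ Finset.range (n + 3),
              (if j = 0 then 0 else Econ q ρ y (n + 1) (j - 1)) * ascP q ρ y x j)
          + (∑ j ∈ Finset.range (n + 3), ρ * y * q ^ j * Econ q ρ y (n + 1) j * ascP q ρ y x j)
          + (∑ j ∈ Finset.range (n + 3),
              (1 - ρ ^ 2 * q ^ j) * qInt q (j + 1) * Econ q ρ y (n + 1) (j + 1) * ascP q ρ y x j)
          - (∑ j ∈ Finset.range (n + 3), qInt q (n + 1) * Econ q ρ y n j * ascP q ρ y x j) := by
        rw [← Finset.sum_add_distrib, ← Finset.sum_add_distrib, ← Finset.sum_sub_distrib]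
        refine Finset.sum_congr rfl fun j _ => ?_
        rw [Econ]
        ring
      have e1 : ∑ j ∈ Finset.range (n + 3),
          (if j = 0 then 0 else Econ q ρ y (n + 1) (j - 1)) * ascP q ρ y x j
          = ∑ j ∈ Finset.range (n + 2), Econ q ρ y (n + 1) j * ascP q ρ y x (j + 1) := by
        rw [Finset.sum_range_succ']
        simp
      have e2 : ∑ j ∈ Finset.range (n + 3), ρ * y * q ^ j * Econ q ρ y (n + 1) j * ascP q ρ y x j
          = ∑ j ∈ Finset.range (n + 2),
              Econ q ρ y (n + 1) j * (ρ * y * q ^ j * ascP q ρ y x j) := by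
        rw [Finset.sum_range_succ, Econ_eq_zero q ρ y (n + 1) (n + 2) (by omega)]
        simp only [mul_zero, zero_mul, add_zero]
        exact Finset.sum_congr rfl fun j _ => by ring
      have e3 : ∑ j ∈ Finset.range (n + 3),
          (1 - ρ ^ 2 * q ^ j) * qInt q (j + 1) * Econ q ρ y (n + 1) (j + 1) * ascP q ρ y x j
          = ∑ j ∈ Finset.range (n + 2),
              Econ q ρ y (n + 1) j * ((1 - ρ ^ 2 * q ^ (j - 1)) * qInt q j * ascP q ρ y x (j - 1)) := by
        rw [Finset.sum_range_succ, Econ_eq_zero q ρ y (n + 1) (n + 3) (by omega)]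
        simp only [mul_zero, zero_mul, add_zero]
        rw [Finset.sum_range_succ, Econ_eq_zero q ρ y (n + 1) (n + 2) (by omega)]
        simp only [mul_zero, zero_mul, add_zero]
        conv_rhs => rw [Finset.sum_range_succ']
        simp only [Nat.add_sub_cancel, qInt_zero, mul_zero, zero_mul, add_zero]
        exact Finset.sum_congr rfl fun j _ => by ring
      have e4 : ∑ j ∈ Finset.range (n + 3), qInt q (n + 1) * Econ q ρ y n j * ascP q ρ y x j
          = qInt q (n + 1) * ∑ j ∈ Finset.range (n + 1), Econ q ρ y n j * ascP q ρ y x j := by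
        rw [Finset.sum_range_succ, Econ_eq_zero q ρ y n (n + 2) (by omega)]
        simp only [mul_zero, zero_mul, add_zero]
        rw [Finset.sum_range_succ, Econ_eq_zero q ρ y n (n + 1) (by omega)]
        simp only [mul_zero, zero_mul, add_zero]
        rw [Finset.mul_sum]
        exact Finset.sum_congr rfl fun j _ => by ring
      rw [hR, e1, e2, e3, e4]
      have e5 : x * ∑ j ∈ Finset.range (n + 2), Econ q ρ y (n + 1) j * ascP q ρ y x j
          = (∑ j ∈ Finset.range (n + 2), Econ q ρ y (n + 1) j * ascP q ρ y x (j + 1))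
          + (∑ j ∈ Finset.range (n + 2), Econ q ρ y (n + 1) j * (ρ * y * q ^ j * ascP q ρ y x j))
          + (∑ j ∈ Finset.range (n + 2), Econ q ρ y (n + 1) j
              * ((1 - ρ ^ 2 * q ^ (j - 1)) * qInt q j * ascP q ρ y x (j - 1))) := by
        rw [Finset.mul_sum, ← Finset.sum_add_distrib, ← Finset.sum_add_distrib]
        refine Finset.sum_congr rfl fun j _ => ?_
        rw [mul_left_comm, ascP_mul]
        ring
      rw [e5]
  exact fun n => (key n).1

theorem stmt17 (q : ℝ) (hq1 : 1 < q) (y : ℝ) (m : ℕ) (hm : 2 ≤ m)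
    (ρ : ℝ) (hρ : ρ = q ^ (-((m : ℝ) - 1) / 2))
    (x lam : Fin m → ℝ) (hsum : ∑ j, lam j = 1) :
    (∀ k : ℕ, 1 ≤ k → k ≤ m - 1 → ∑ j, lam j * ascP q ρ y (x j) k = 0) ↔
    (∀ k : ℕ, 1 ≤ k → k ≤ m - 1 → ∑ j, lam j * Hq q (x j) k = ρ ^ k * Hq q y k) := by
  set A : ℕ → ℝ := fun k => ∑ j, lam j * ascP q ρ y (x j) k with hA
  have hA0 : A 0 = 1 := by
    simp only [hA, ascP, mul_one]
    exact hsum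
  have hB : ∀ k : ℕ, (∑ j, lam j * Hq q (x j) k)
      = ∑ i ∈ Finset.range (k + 1), Econ q ρ y k i * A i := by
    intro k
    have : ∀ j : Fin m, lam j * Hq q (x j) k
        = ∑ i ∈ Finset.range (k + 1), Econ q ρ y k i * (lam j * ascP q ρ y (x j) i) := by
      intro j
      rw [Hq_eq_sum q ρ y (x j) k, Finset.mul_sum]
      exact Finset.sum_congr rfl fun i _ => by ring
    rw [Finset.sum_congr rfl fun j _ => this j, Finset.sum_comm]
    exact Finset.sum_congr rfl fun i _ => by rw [← Finset.mul_sum]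
  constructor
  · intro h k hk1 hk2
    have hAzero : ∀ i : ℕ, 1 ≤ i → i ≤ m - 1 → A i = 0 := fun i h1 h2 => h i h1 h2
    rw [hB k]
    have : ∀ i ∈ Finset.range (k + 1), Econ q ρ y k i * A i
        = if i = 0 then Econ q ρ y k 0 else 0 := by
      intro i hi
      rcases Nat.eq_zero_or_pos i with h0 | h0
      · subst h0; rw [if_pos rfl, hA0, mul_one]
      · simp only [Finset.mem_range] at hi
        rw [if_neg (by omega), hAzero i (by omega) (by omega), mul_zero]
    rw [Finset.sum_congr rfl this, Finset.sum_ite_eq' (Finset.range (k + 1)) 0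
      (fun _ => Econ q ρ y k 0), if_pos (by simp)]
    rw [Econ_left]
  · intro h k hk1 hk2
    induction k using Nat.strong_induction_on with
    | _ k ihk =>
      match k, hk1 with
      | k + 1, _ =>
        have hBk := h (k + 1) (by omega) hk2
        rw [hB (k + 1), Finset.sum_range_succ, Econ_diag, one_mul] at hBk
        have hz : ∑ i ∈ Finset.range (k + 1), Econ q ρ y (k + 1) i * A i
            = ρ ^ (k + 1) * Hq q y (k + 1) := by
          rw [Finset.sum_range_succ']
          have hzz : ∀ i ∈ Finset.range k, Econ q ρ y (k + 1) (i + 1) * A (i + 1) = 0 := by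
            intro i hi
            simp only [Finset.mem_range] at hi
            have : A (i + 1) = 0 := ihk (i + 1) (by omega) (by omega) (by omega)
            rw [this, mul_zero]
          rw [Finset.sum_congr rfl hzz, Finset.sum_const_zero, zero_add, hA0, mul_one,
            Econ_left]
        rw [hz] at hBk
        linarith
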